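/- Let A ∈ ℝ^{R×R} and B ∈ ℝ^{S×S} be symmetric positive semidefinite, E ∈ ℝ^{R×S} arbitrary, and λ > 0. Then the matrix equation AXB + λX = E has a unique solution X ∈ ℝ^{R×S}, given by X = Q_A [ (d_A d_Bᵀ + λ 1_{R×S})^{⊙−1} ⊙ (Q_Aᵀ E Q_B) ] Q_Bᵀ, where A = Q_A diag(d_A) Q_Aᵀ and B = Q_B diag(d_B) Q_Bᵀ are spectral decompositions with orthogonal Q_A, Q_B and nonnegative eigenvalue vectors d_A, d_B, ⊙ is the Hadamard (entrywise) product, ^{⊙−1} is the entrywise inverse, and 1_{R×S} is the all-ones matrix. -/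
import Mathlib


open Matrix

/-- For symmetric positive semidefinite `A`, `B` and `λ > 0`, the matrix equation
`AXB + λX = E` has a unique solution, given in closed form via the spectral
decompositions `A = Q_A diag(d_A) Q_Aᵀ`, `B = Q_B diag(d_B) Q_Bᵀ` by
`X = Q_A [ (d_A d_Bᵀ + λ 1)^{⊙-1} ⊙ (Q_Aᵀ E Q_B) ] Q_Bᵀ`. -/
theorem sylvester_type_solution {R S : ℕ}
    {A : Matrix (Fin R) (Fin R) ℝ} {B : Matrix (Fin S) (Fin S) ℝ}
    (hA : A.PosSemidef) (hB : B.PosSemidef)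
    (E : Matrix (Fin R) (Fin S) ℝ) {lam : ℝ} (hlam : 0 < lam)
    (QA : Matrix (Fin R) (Fin R) ℝ) (QB : Matrix (Fin S) (Fin S) ℝ)
    (dA : Fin R → ℝ) (dB : Fin S → ℝ)
    (hQA : QAᵀ * QA = 1) (hQB : QBᵀ * QB = 1)
    (hdA : ∀ r, 0 ≤ dA r) (hdB : ∀ s, 0 ≤ dB s)
    (hAdec : A = QA * Matrix.diagonal dA * QAᵀ)
    (hBdec : B = QB * Matrix.diagonal dB * QBᵀ) :
    ∀ X₀ : Matrix (Fin R) (Fin S) ℝ,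
      X₀ = QA * Matrix.hadamard (Matrix.of fun r s => (dA r * dB s + lam)⁻¹)
              (QAᵀ * E * QB) * QBᵀ →
      (A * X₀ * B + lam • X₀ = E ∧
        ∀ X : Matrix (Fin R) (Fin S) ℝ, A * X * B + lam • X = E → X = X₀) := by
  intro X₀ hX₀
  have hQA' : QA * QAᵀ = 1 := mul_eq_one_comm.mp hQA
  have hQB' : QB * QBᵀ = 1 := mul_eq_one_comm.mp hQB
  have hpos : ∀ (r : Fin R) (s : Fin S), dA r * dB s + lam ≠ 0 := fun r s =>
    ne_of_gt (add_pos_of_nonneg_of_pos (mul_nonneg (hdA r) (hdB s)) hlam)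
  -- recovery of X from Y = QAᵀ * X * QB
  have hrec : ∀ X : Matrix (Fin R) (Fin S) ℝ, QA * (QAᵀ * X * QB) * QBᵀ = X := by
    intro X
    calc QA * (QAᵀ * X * QB) * QBᵀ = (QA * QAᵀ) * X * (QB * QBᵀ) := by
          simp only [Matrix.mul_assoc]
      _ = X := by rw [hQA', hQB']; simp
  have hcomp : ∀ M : Matrix (Fin R) (Fin S) ℝ, QAᵀ * (QA * M * QBᵀ) * QB = M := by
    intro M
    calc QAᵀ * (QA * M * QBᵀ) * QB = (QAᵀ * QA) * M * (QBᵀ * QB) := by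
          simp only [Matrix.mul_assoc]
      _ = M := by rw [hQA, hQB]; simp
  -- the key transformation
  have key : ∀ X : Matrix (Fin R) (Fin S) ℝ,
      A * X * B + lam • X =
        QA * (Matrix.of fun r s => (dA r * dB s + lam) * (QAᵀ * X * QB) r s) * QBᵀ := by
    intro X
    have h1 : A * X * B =
        QA * (Matrix.of fun r s => dA r * ((QAᵀ * X * QB) r s) * dB s) * QBᵀ := by
      have hd : Matrix.diagonal dA * (QAᵀ * X * QB) * Matrix.diagonal dB =
          Matrix.of fun r s => dA r * ((QAᵀ * X * QB) r s) * dB s := by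
        ext r s
        simp [Matrix.diagonal_mul, Matrix.mul_diagonal]
      rw [hAdec, hBdec, ← hd]
      simp only [Matrix.mul_assoc]
    have h2 : lam • X =
        QA * (Matrix.of fun r s => lam * ((QAᵀ * X * QB) r s)) * QBᵀ := by
      have hs : (Matrix.of fun r s => lam * ((QAᵀ * X * QB) r s)) =
          lam • (QAᵀ * X * QB) := by
        ext r s; simp
      rw [hs, Matrix.mul_smul, Matrix.smul_mul, hrec]
    rw [h1, h2, ← Matrix.add_mul, ← Matrix.mul_add]
    congr 1
    congr 1
    ext r s
    simp [add_mul]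
    ring
  -- compute QAᵀ * X₀ * QB
  have hY₀ : QAᵀ * X₀ * QB =
      Matrix.hadamard (Matrix.of fun r s => (dA r * dB s + lam)⁻¹) (QAᵀ * E * QB) := by
    rw [hX₀, hcomp]
  have hsolve : A * X₀ * B + lam • X₀ = E := by
    rw [key X₀, hY₀]
    have hc : (Matrix.of fun r s => (dA r * dB s + lam) *
        (Matrix.hadamard (Matrix.of fun r s => (dA r * dB s + lam)⁻¹) (QAᵀ * E * QB)) r s)
        = QAᵀ * E * QB := by
      ext r s
      simp [Matrix.hadamard]
      rw [← mul_assoc, mul_inv_cancel₀ (hpos r s), one_mul]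
    rw [hc, hrec]
  refine ⟨hsolve, ?_⟩
  intro X hX
  have h := hX.trans hsolve.symm
  rw [key X, key X₀] at h
  have h2 : (Matrix.of fun r s => (dA r * dB s + lam) * (QAᵀ * X * QB) r s)
      = Matrix.of fun r s => (dA r * dB s + lam) * (QAᵀ * X₀ * QB) r s := by
    rw [← hcomp (Matrix.of fun r s => (dA r * dB s + lam) * (QAᵀ * X * QB) r s), h,
      hcomp]
  have h3 : QAᵀ * X * QB = QAᵀ * X₀ * QB := by
    ext r s
    have hrs := congrFun (congrFun h2 r) s
    simp only [Matrix.of_apply] at hrs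
    exact mul_left_cancel₀ (hpos r s) hrs
  calc X = QA * (QAᵀ * X * QB) * QBᵀ := (hrec X).symm
    _ = QA * (QAᵀ * X₀ * QB) * QBᵀ := by rw [h3]
    _ = X₀ := hrec X₀
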